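/- arXiv:2302.08621 — 3 statements merged into one kernel-verified Lean document; each statement's English description precedes it below -/
import Mathlib

section
/- For any two finite Markov chains 𝒳 = (X, m^X, ν^X) and 𝒴 = (Y, m^Y, ν^Y), any cost matrix C: X×Y → ℝ₊, and any probability distribution p on ℕ, the infimum defining the OTM distance d_OTM^p(𝒳,𝒴;C) is attained: there exists a Markovian coupling (initial coupling ν together with transition couplings (m^{(t)})_{t≥1}) whose associated value Σ_{t∈ℕ} p(t) Σ_{x,y} C(x,y) μ_t(x,y) equals d_OTM^p(𝒳,𝒴;C). -/
open scoped BigOperators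
open Filter Topology

/-- A probability vector on a finite type. -/
def IsProb {X : Type*} [Fintype X] (ν : X → ℝ) : Prop :=
  (∀ x, 0 ≤ ν x) ∧ ∑ x, ν x = 1

/-- `μ` is a coupling of `α` and `β`. -/
def IsCoupling {X Y : Type*} [Fintype X] [Fintype Y]
    (μ : X × Y → ℝ) (α : X → ℝ) (β : Y → ℝ) : Prop :=
  (∀ z, 0 ≤ μ z) ∧ (∀ x, ∑ y, μ (x, y) = α x) ∧ (∀ y, ∑ x, μ (x, y) = β y)

/-- A finite Markov chain: a transition kernel together with an initial distribution. -/
structure MarkovChain (X : Type*) [Fintype X] where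
  kernel : X → X → ℝ
  init : X → ℝ
  kernel_prob : ∀ x, IsProb (kernel x)
  init_prob : IsProb init

/-- A Markovian coupling between two finite Markov chains.  `trans t` is the
transition coupling used from time `t` to time `t+1` (i.e. `m^{(t+1)}`). -/
structure MarkovCoupling {X Y : Type*} [Fintype X] [Fintype Y]
    (MX : MarkovChain X) (MY : MarkovChain Y) where
  init : X × Y → ℝ
  trans : ℕ → X × Y → X × Y → ℝ
  init_coupling : IsCoupling init MX.init MY.init
  trans_coupling : ∀ t xy, IsCoupling (trans t xy) (MX.kernel xy.1) (MY.kernel xy.2)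

/-- Time-`t` law determined by an initial distribution and step kernels. -/
noncomputable def lawAux {X Y : Type*} [Fintype X] [Fintype Y]
    (ν : X × Y → ℝ) (m : ℕ → X × Y → X × Y → ℝ) : ℕ → X × Y → ℝ
  | 0 => ν
  | t + 1 => fun z => ∑ w : X × Y, m t w z * lawAux ν m t w

/-- The time-`t` law of a Markovian coupling. -/
noncomputable def MarkovCoupling.law {X Y : Type*} [Fintype X] [Fintype Y]
    {MX : MarkovChain X} {MY : MarkovChain Y} (π : MarkovCoupling MX MY) :
    ℕ → X × Y → ℝ :=
  lawAux π.init π.trans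

/-- `p` is a probability distribution on `ℕ`. -/
def IsProbNat (p : ℕ → ℝ) : Prop := (∀ t, 0 ≤ p t) ∧ HasSum p 1

/-- The Optimal Transport Markov (OTM) distance associated to `p`. -/
noncomputable def dOTM {X Y : Type*} [Fintype X] [Fintype Y] (p : ℕ → ℝ)
    (MX : MarkovChain X) (MY : MarkovChain Y) (C : X × Y → ℝ) : ℝ :=
  ⨅ π : MarkovCoupling MX MY, ∑' t, p t * ∑ z : X × Y, C z * π.law t z

section AuxLemmas

variable {X Y : Type*} [Fintype X] [Fintype Y]

lemma isClosed_couplingSet (α : X → ℝ) (β : Y → ℝ) :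
    IsClosed {μ : X × Y → ℝ | IsCoupling μ α β} := by
  have h1 : IsClosed {μ : X × Y → ℝ | ∀ z, 0 ≤ μ z} := by
    rw [Set.setOf_forall]
    exact isClosed_iInter fun z => isClosed_le continuous_const (continuous_apply z)
  have h2 : IsClosed {μ : X × Y → ℝ | ∀ x, ∑ y, μ (x, y) = α x} := by
    rw [Set.setOf_forall]
    exact isClosed_iInter fun x => isClosed_eq
      (continuous_finset_sum _ fun y _ => continuous_apply (x, y)) continuous_const
  have h3 : IsClosed {μ : X × Y → ℝ | ∀ y, ∑ x, μ (x, y) = β y} := by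
    rw [Set.setOf_forall]
    exact isClosed_iInter fun y => isClosed_eq
      (continuous_finset_sum _ fun x _ => continuous_apply (x, y)) continuous_const
  have heq : {μ : X × Y → ℝ | IsCoupling μ α β} =
      {μ : X × Y → ℝ | ∀ z, 0 ≤ μ z} ∩ ({μ : X × Y → ℝ | ∀ x, ∑ y, μ (x, y) = α x} ∩
        {μ : X × Y → ℝ | ∀ y, ∑ x, μ (x, y) = β y}) := rfl
  rw [heq]
  exact (h1.inter (h2.inter h3))

lemma coupling_mem_Icc {α : X → ℝ} {β : Y → ℝ} (hα : IsProb α) {μ : X × Y → ℝ}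
    (hμ : IsCoupling μ α β) : ∀ z, μ z ∈ Set.Icc (0 : ℝ) 1 := by
  rintro ⟨x, y⟩
  refine ⟨hμ.1 _, ?_⟩
  have h1 : μ (x, y) ≤ α x := by
    rw [← hμ.2.1 x]
    exact Finset.single_le_sum (fun y' _ => hμ.1 (x, y')) (Finset.mem_univ y)
  have h2 : α x ≤ 1 := by
    rw [← hα.2]
    exact Finset.single_le_sum (fun x' _ => hα.1 x') (Finset.mem_univ x)
  linarith

lemma isCompact_couplingSet {α : X → ℝ} {β : Y → ℝ} (hα : IsProb α) :
    IsCompact {μ : X × Y → ℝ | IsCoupling μ α β} := by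
  refine IsCompact.of_isClosed_subset
    (isCompact_univ_pi fun _ : X × Y => (isCompact_Icc : IsCompact (Set.Icc (0:ℝ) 1)))
    (isClosed_couplingSet α β) ?_
  intro μ hμ
  exact fun z _ => coupling_mem_Icc hα hμ z

/-- The product coupling. -/
lemma prod_coupling {α : X → ℝ} {β : Y → ℝ} (hα : IsProb α) (hβ : IsProb β) :
    IsCoupling (fun z => α z.1 * β z.2) α β := by
  refine ⟨fun z => mul_nonneg (hα.1 _) (hβ.1 _), fun x => ?_, fun y => ?_⟩
  · show ∑ y : Y, α x * β y = α x
    rw [← Finset.mul_sum, hβ.2, mul_one]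
  · show ∑ x : X, α x * β y = β y
    rw [← Finset.sum_mul, hα.2, one_mul]

lemma continuous_lawAux (t : ℕ) :
    ∀ z : X × Y, Continuous (fun q : (X × Y → ℝ) × (ℕ → X × Y → X × Y → ℝ) =>
      lawAux q.1 q.2 t z) := by
  induction t with
  | zero => exact fun z => (continuous_apply z).comp continuous_fst
  | succ t ih =>
    intro z
    show Continuous fun q : (X × Y → ℝ) × (ℕ → X × Y → X × Y → ℝ) =>
      ∑ w : X × Y, q.2 t w z * lawAux q.1 q.2 t w
    refine continuous_finset_sum _ fun w _ => Continuous.mul ?_ (ih w)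
    exact (continuous_apply z).comp (((continuous_apply w).comp
      ((continuous_apply t).comp continuous_snd)))

lemma lawAux_nonneg {ν : X × Y → ℝ} {m : ℕ → X × Y → X × Y → ℝ}
    (hν : ∀ z, 0 ≤ ν z) (hm : ∀ t w z, 0 ≤ m t w z) :
    ∀ t z, 0 ≤ lawAux ν m t z := by
  intro t
  induction t with
  | zero => exact hν
  | succ t ih =>
    intro z
    exact Finset.sum_nonneg fun w _ => mul_nonneg (hm t w z) (ih w)

lemma lawAux_sum_one {MX : MarkovChain X} {MY : MarkovChain Y}
    {ν : X × Y → ℝ} {m : ℕ → X × Y → X × Y → ℝ}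
    (hν : IsCoupling ν MX.init MY.init)
    (hm : ∀ t xy, IsCoupling (m t xy) (MX.kernel xy.1) (MY.kernel xy.2)) :
    ∀ t, ∑ z : X × Y, lawAux ν m t z = 1 := by
  have hsum1 : ∀ t (w : X × Y), ∑ z : X × Y, m t w z = 1 := by
    intro t w
    rw [Fintype.sum_prod_type]
    have : ∀ x : X, ∑ y : Y, m t w (x, y) = MX.kernel w.1 x := (hm t w).2.1
    simp_rw [this]
    exact (MX.kernel_prob w.1).2
  intro t
  induction t with
  | zero =>
    show ∑ z : X × Y, ν z = 1
    rw [Fintype.sum_prod_type]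
    have : ∀ x : X, ∑ y : Y, ν (x, y) = MX.init x := hν.2.1
    simp_rw [this]
    exact MX.init_prob.2
  | succ t ih =>
    show ∑ z : X × Y, ∑ w : X × Y, m t w z * lawAux ν m t w = 1
    rw [Finset.sum_comm]
    calc ∑ w : X × Y, ∑ z : X × Y, m t w z * lawAux ν m t w
        = ∑ w : X × Y, (∑ z : X × Y, m t w z) * lawAux ν m t w := by
          simp_rw [Finset.sum_mul]
      _ = ∑ w : X × Y, lawAux ν m t w := by simp_rw [hsum1, one_mul]
      _ = 1 := ih

lemma lawAux_le_one {MX : MarkovChain X} {MY : MarkovChain Y}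
    {ν : X × Y → ℝ} {m : ℕ → X × Y → X × Y → ℝ}
    (hν : IsCoupling ν MX.init MY.init)
    (hm : ∀ t xy, IsCoupling (m t xy) (MX.kernel xy.1) (MY.kernel xy.2)) :
    ∀ t z, lawAux ν m t z ≤ 1 := by
  intro t z
  have h1 := lawAux_sum_one hν hm t
  have h2 : lawAux ν m t z ≤ ∑ z' : X × Y, lawAux ν m t z' :=
    Finset.single_le_sum (fun z' _ => lawAux_nonneg hν.1 (fun t w z => (hm t w).1 z) t z')
      (Finset.mem_univ z)
  linarith

end AuxLemmas

/-- The infimum defining the OTM distance is attained by some Markovian coupling. -/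
theorem stmt0 {X Y : Type*} [Fintype X] [Fintype Y]
    (MX : MarkovChain X) (MY : MarkovChain Y)
    (C : X × Y → ℝ) (hC : ∀ z, 0 ≤ C z)
    (p : ℕ → ℝ) (hp : IsProbNat p) :
    ∃ π : MarkovCoupling MX MY,
      ∑' t, p t * ∑ z : X × Y, C z * π.law t z = dOTM p MX MY C := by
  classical
  set A : Set (X × Y → ℝ) := {μ | IsCoupling μ MX.init MY.init} with hA
  set B : Set (ℕ → X × Y → X × Y → ℝ) :=
    {m | ∀ t xy, IsCoupling (m t xy) (MX.kernel xy.1) (MY.kernel xy.2)} with hB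
  set S : Set ((X × Y → ℝ) × (ℕ → X × Y → X × Y → ℝ)) := A ×ˢ B with hSdef
  have hAcomp : IsCompact A := isCompact_couplingSet MX.init_prob
  have hBcomp : IsCompact B := by
    have hBeq : B = Set.univ.pi (fun _ : ℕ => Set.univ.pi
        (fun xy : X × Y => {μ | IsCoupling μ (MX.kernel xy.1) (MY.kernel xy.2)})) := by
      ext m
      simp [hB, Set.mem_pi]
    rw [hBeq]
    exact isCompact_univ_pi fun _ => isCompact_univ_pi
      fun xy => isCompact_couplingSet (MX.kernel_prob xy.1)
  have hScomp : IsCompact S := hAcomp.prod hBcomp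
  have hSne : S.Nonempty := by
    refine ⟨(fun z => MX.init z.1 * MY.init z.2,
      fun _ xy z => MX.kernel xy.1 z.1 * MY.kernel xy.2 z.2), ?_, ?_⟩
    · exact prod_coupling MX.init_prob MY.init_prob
    · exact fun t xy => prod_coupling (MX.kernel_prob xy.1) (MY.kernel_prob xy.2)
  -- the objective
  set F : (X × Y → ℝ) × (ℕ → X × Y → X × Y → ℝ) → ℝ :=
    fun q => ∑' t, p t * ∑ z : X × Y, C z * lawAux q.1 q.2 t z with hF
  have hFcont : ContinuousOn F S := by
    rw [continuousOn_iff_continuous_restrict]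
    show Continuous fun s : S => ∑' t, p t * ∑ z : X × Y, C z * lawAux s.1.1 s.1.2 t z
    refine continuous_tsum (f := fun t (s : S) =>
        p t * ∑ z : X × Y, C z * lawAux s.1.1 s.1.2 t z)
      (u := fun t => p t * ∑ z : X × Y, C z) ?_ ?_ ?_
    · intro t
      refine continuous_const.mul (continuous_finset_sum _ fun z _ => continuous_const.mul ?_)
      exact (continuous_lawAux t z).comp continuous_subtype_val
    · exact (hp.2.summable).mul_right _
    · rintro t ⟨⟨ν, m⟩, hνA, hmB⟩
      have hν : IsCoupling ν MX.init MY.init := hνA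
      have hm : ∀ t xy, IsCoupling (m t xy) (MX.kernel xy.1) (MY.kernel xy.2) := hmB
      have hlaw0 : ∀ z, 0 ≤ lawAux ν m t z :=
        lawAux_nonneg hν.1 (fun t w z => (hm t w).1 z) t
      have hlaw1 : ∀ z, lawAux ν m t z ≤ 1 := lawAux_le_one hν hm t
      have hnn : 0 ≤ p t * ∑ z : X × Y, C z * lawAux ν m t z :=
        mul_nonneg (hp.1 t) (Finset.sum_nonneg fun z _ => mul_nonneg (hC z) (hlaw0 z))
      rw [Real.norm_eq_abs, abs_of_nonneg hnn]
      refine mul_le_mul_of_nonneg_left ?_ (hp.1 t)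
      exact Finset.sum_le_sum fun z _ => mul_le_of_le_one_right (hC z) (hlaw1 z)
  obtain ⟨q₀, hq₀S, hmin⟩ := hScomp.exists_isMinOn hSne hFcont
  have hq₀A : IsCoupling q₀.1 MX.init MY.init := hq₀S.1
  have hq₀B : ∀ t xy, IsCoupling (q₀.2 t xy) (MX.kernel xy.1) (MY.kernel xy.2) := hq₀S.2
  set π₀ : MarkovCoupling MX MY := ⟨q₀.1, q₀.2, hq₀A, hq₀B⟩ with hπ₀
  have hobj : ∀ π' : MarkovCoupling MX MY,
      (∑' t, p t * ∑ z : X × Y, C z * π'.law t z) = F (π'.init, π'.trans) := fun _ => rfl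
  have key : ∀ π' : MarkovCoupling MX MY,
      (∑' t, p t * ∑ z : X × Y, C z * π₀.law t z) ≤
      (∑' t, p t * ∑ z : X × Y, C z * π'.law t z) := by
    intro π'
    rw [hobj, hobj]
    have hmem : (π'.init, π'.trans) ∈ S := ⟨π'.init_coupling, π'.trans_coupling⟩
    exact hmin hmem
  haveI : Nonempty (MarkovCoupling MX MY) := ⟨π₀⟩
  refine ⟨π₀, le_antisymm ?_ ?_⟩
  · exact le_ciInf key
  · exact ciInf_le ⟨_, by rintro _ ⟨π', rfl⟩; exact key π'⟩ π₀
end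

section
/- Suppose the finite Markov chains 𝒳 and 𝒴 are stationary and p is a probability distribution on ℕ with full support (p(t) > 0 for all t ∈ ℕ). Then for any cost matrix C: X×Y → ℝ₊, d_OTC(𝒳,𝒴;C) = 0 if and only if d_OTM^p(𝒳,𝒴;C) = 0. -/
open scoped BigOperators
open Filter Topology

/-- A Markovian coupling is time homogeneous if its transition couplings do not
depend on the time index. -/
def IsTimeHomogeneous {X Y : Type*} [Fintype X] [Fintype Y]
    {MX : MarkovChain X} {MY : MarkovChain Y} (π : MarkovCoupling MX MY) : Prop :=
  ∀ t, π.trans t = π.trans 0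

/-- The initial coupling is stationary for the coupled transition kernel. -/
def HasStationaryInit {X Y : Type*} [Fintype X] [Fintype Y]
    {MX : MarkovChain X} {MY : MarkovChain Y} (π : MarkovCoupling MX MY) : Prop :=
  ∀ z' : X × Y, ∑ z : X × Y, π.trans 0 z z' * π.init z = π.init z'

/-- A Markov chain is stationary if its initial distribution is stationary for its kernel. -/
def IsStationaryChain {X : Type*} [Fintype X] (M : MarkovChain X) : Prop :=
  ∀ x', ∑ x, M.kernel x x' * M.init x = M.init x'

/-- The optimal transition coupling (OTC) distance. -/
noncomputable def dOTC {X Y : Type*} [Fintype X] [Fintype Y]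
    (MX : MarkovChain X) (MY : MarkovChain Y) (C : X × Y → ℝ) : ℝ :=
  ⨅ π : {π : MarkovCoupling MX MY // IsTimeHomogeneous π ∧ HasStationaryInit π},
    ∑ z : X × Y, C z * π.1.init z

/-! A stationary time-homogeneous coupling has constant law, so its OTM cost equals its OTC cost;
hence `dOTM ≤ dOTC`. Conversely, if `dOTM = 0` then, `p` having full support, there are couplings
whose cost at every time `t ≤ N` is as small as we like. Averaging over `t ≤ N` the joint law of
two consecutive coupled states gives a flow on `(X × Y) × (X × Y)` of small cost, whose conditional
laws are transition couplings and whose source law couples the stationary laws, and which is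
stationary up to an error `O(1 / N)`. Such flows form a compact set, so there is an exactly
stationary flow of zero cost, and it defines a stationary time-homogeneous coupling of zero cost. -/

open Finset

theorem IsCompact.exists_le_of_forall_exists_lt {β : Type*} [TopologicalSpace β] {K : Set β}
    {g : β → ℝ} {a : ℝ} (hK : IsCompact K) (hg : ContinuousOn g K)
    (h : ∀ η, a < η → ∃ x ∈ K, g x < η) : ∃ x ∈ K, g x ≤ a := by
  obtain ⟨x₀, hx₀, -⟩ := h (a + 1) (lt_add_one a)
  obtain ⟨x, hxK, hmin⟩ := hK.exists_isMinOn ⟨x₀, hx₀⟩ hg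
  refine ⟨x, hxK, le_of_forall_gt_imp_ge_of_dense fun η hη => ?_⟩
  obtain ⟨y, hyK, hy⟩ := h η hη
  exact (hmin hyK).trans hy.le

namespace MarkovCoupling

variable {X Y : Type*} [Fintype X] [Fintype Y] {MX : MarkovChain X} {MY : MarkovChain Y}
  (π : MarkovCoupling MX MY)

theorem law_succ (t : ℕ) (z : X × Y) :
    π.law (t + 1) z = ∑ w : X × Y, π.trans t w z * π.law t w := rfl

theorem law_nonneg : ∀ t z, 0 ≤ π.law t z
  | 0, z => π.init_coupling.1 z
  | t + 1, z => sum_nonneg fun w _ => mul_nonneg ((π.trans_coupling t w).1 z) (law_nonneg t w)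

theorem sum_trans_eq_one (t : ℕ) (z : X × Y) : ∑ z', π.trans t z z' = 1 := by
  rw [Fintype.sum_prod_type, ← (MX.kernel_prob z.1).2]
  exact sum_congr rfl fun x' _ => (π.trans_coupling t z).2.1 x'

theorem sum_law_eq_one : ∀ t, ∑ z, π.law t z = 1
  | 0 => by
    rw [law, lawAux, Fintype.sum_prod_type, ← MX.init_prob.2]
    exact sum_congr rfl fun x _ => π.init_coupling.2.1 x
  | t + 1 => by
    simp only [law_succ]
    rw [sum_comm, ← sum_law_eq_one t]
    exact sum_congr rfl fun w _ => by rw [← sum_mul, sum_trans_eq_one, one_mul]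

theorem law_le_one (t : ℕ) (z : X × Y) : π.law t z ≤ 1 :=
  (single_le_sum (fun w _ => π.law_nonneg t w) (mem_univ z)).trans (π.sum_law_eq_one t).le

theorem sum_law_fst (hMX : IsStationaryChain MX) : ∀ t x, ∑ y, π.law t (x, y) = MX.init x
  | 0, x => π.init_coupling.2.1 x
  | t + 1, x => by
    calc ∑ y, π.law (t + 1) (x, y) = ∑ w, (∑ y, π.trans t w (x, y)) * π.law t w := by
          simp only [law_succ, sum_mul]; exact sum_comm
      _ = ∑ x₁, MX.kernel x₁ x * ∑ y₁, π.law t (x₁, y₁) := by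
          simp only [(π.trans_coupling t _).2.1, Fintype.sum_prod_type, mul_sum]
      _ = MX.init x := by simp only [sum_law_fst hMX t]; exact hMX x

theorem sum_law_snd (hMY : IsStationaryChain MY) : ∀ t y, ∑ x, π.law t (x, y) = MY.init y
  | 0, y => π.init_coupling.2.2 y
  | t + 1, y => by
    calc ∑ x, π.law (t + 1) (x, y) = ∑ w, (∑ x, π.trans t w (x, y)) * π.law t w := by
          simp only [law_succ, sum_mul]; exact sum_comm
      _ = ∑ y₁, MY.kernel y₁ y * ∑ x₁, π.law t (x₁, y₁) := by
          simp only [(π.trans_coupling t _).2.2, Fintype.sum_prod_type_right, mul_sum]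
      _ = MY.init y := by simp only [sum_law_snd hMY t]; exact hMY y

theorem law_eq_init (hhom : IsTimeHomogeneous π) (hstat : HasStationaryInit π) :
    ∀ t, π.law t = π.init
  | 0 => rfl
  | t + 1 => funext fun z' => by
    simp only [law_succ, hhom t, law_eq_init hhom hstat t]
    exact hstat z'

variable (MX MY) in
noncomputable def prod : MarkovCoupling MX MY where
  init z := MX.init z.1 * MY.init z.2
  trans _ z z' := MX.kernel z.1 z'.1 * MY.kernel z.2 z'.2
  init_coupling := by
    refine ⟨fun z => mul_nonneg (MX.init_prob.1 _) (MY.init_prob.1 _), fun x => ?_, fun y => ?_⟩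
    · dsimp only
      rw [← mul_sum, MY.init_prob.2, mul_one]
    · dsimp only
      rw [← sum_mul, MX.init_prob.2, one_mul]
  trans_coupling t z := by
    refine ⟨fun z' => mul_nonneg ((MX.kernel_prob _).1 _) ((MY.kernel_prob _).1 _),
      fun x => ?_, fun y => ?_⟩
    · dsimp only
      rw [← mul_sum, (MY.kernel_prob _).2, mul_one]
    · dsimp only
      rw [← sum_mul, (MX.kernel_prob _).2, one_mul]

theorem hasStationaryInit_prod (hMX : IsStationaryChain MX) (hMY : IsStationaryChain MY) :
    HasStationaryInit (prod MX MY) := fun z' => by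
  calc ∑ z : X × Y, MX.kernel z.1 z'.1 * MY.kernel z.2 z'.2 * (MX.init z.1 * MY.init z.2)
      = (∑ x, MX.kernel x z'.1 * MX.init x) * ∑ y, MY.kernel y z'.2 * MY.init y := by
        rw [Fintype.sum_prod_type, sum_mul_sum]
        exact sum_congr rfl fun x _ => sum_congr rfl fun y _ => by ring
    _ = MX.init z'.1 * MY.init z'.2 := by rw [hMX, hMY]

end MarkovCoupling

section Flow

variable {α : Type*} [Fintype α]

def outMass (Q : α × α → ℝ) (a : α) : ℝ := ∑ b, Q (a, b)

def inMass (Q : α × α → ℝ) (b : α) : ℝ := ∑ a, Q (a, b)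

def flowDefect (Q : α × α → ℝ) : ℝ := ∑ a, |inMass Q a - outMass Q a|

@[fun_prop]
theorem continuous_flowDefect : Continuous (flowDefect (α := α)) := by
  unfold flowDefect inMass outMass; fun_prop

theorem flowDefect_nonneg (Q : α × α → ℝ) : 0 ≤ flowDefect Q :=
  sum_nonneg fun _ _ => abs_nonneg _

theorem inMass_eq_outMass_of_flowDefect_eq_zero {Q : α × α → ℝ} (h : flowDefect Q = 0) :
    inMass Q = outMass Q := by
  funext a
  have := (sum_eq_zero_iff_of_nonneg fun _ _ => abs_nonneg _).mp h a (mem_univ a)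
  exact sub_eq_zero.mp (abs_eq_zero.mp this)

end Flow

section CouplingFlow

variable {X Y : Type*} [Fintype X] [Fintype Y] {MX : MarkovChain X} {MY : MarkovChain Y}

variable (MX MY) in
def couplingFlows : Set ((X × Y) × (X × Y) → ℝ) :=
  {Q | (∀ e, 0 ≤ Q e) ∧
    (∀ z x', ∑ y', Q (z, (x', y')) = outMass Q z * MX.kernel z.1 x') ∧
    (∀ z y', ∑ x', Q (z, (x', y')) = outMass Q z * MY.kernel z.2 y') ∧
    (∀ x, ∑ y, outMass Q (x, y) = MX.init x) ∧
    (∀ y, ∑ x, outMass Q (x, y) = MY.init y)}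

theorem isClosed_couplingFlows : IsClosed (couplingFlows MX MY) := by
  simp only [couplingFlows, outMass, Set.ofPred_and, Set.ofPred_forall]
  refine .inter (isClosed_iInter fun e => isClosed_le continuous_const (continuous_apply e)) <|
    .inter (isClosed_iInter fun z => isClosed_iInter fun x' => isClosed_eq ?_ ?_) <|
    .inter (isClosed_iInter fun z => isClosed_iInter fun y' => isClosed_eq ?_ ?_) <|
    .inter (isClosed_iInter fun x => isClosed_eq ?_ continuous_const)
      (isClosed_iInter fun y => isClosed_eq ?_ continuous_const) <;> fun_prop

theorem couplingFlows_subset_Icc : couplingFlows MX MY ⊆ Set.Icc 0 1 := by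
  rintro Q ⟨hQ0, -, -, hQX, -⟩
  refine ⟨hQ0, fun e => ?_⟩
  calc Q e ≤ ∑ e', Q e' := single_le_sum (fun e' _ => hQ0 e') (mem_univ e)
    _ = ∑ x, MX.init x := by
      simp only [← hQX, outMass, Fintype.sum_prod_type]
    _ = 1 := MX.init_prob.2

theorem isCompact_couplingFlows : IsCompact (couplingFlows MX MY) :=
  isCompact_Icc.of_isClosed_subset isClosed_couplingFlows couplingFlows_subset_Icc

variable (MX MY) in
/-- Where the source has no mass any transition coupling will do; we take the independent one. -/
noncomputable def flowKernel (Q : (X × Y) × (X × Y) → ℝ) (z z' : X × Y) : ℝ :=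
  if 0 < outMass Q z then Q (z, z') / outMass Q z else (MarkovCoupling.prod MX MY).trans 0 z z'

variable {Q : (X × Y) × (X × Y) → ℝ}

theorem isCoupling_flowKernel (hQ : Q ∈ couplingFlows MX MY) (z : X × Y) :
    IsCoupling (flowKernel MX MY Q z) (MX.kernel z.1) (MY.kernel z.2) := by
  obtain ⟨hQ0, hQX, hQY, -, -⟩ := hQ
  unfold flowKernel
  split_ifs with hz
  · refine ⟨fun z' => div_nonneg (hQ0 _) hz.le, fun x' => ?_, fun y' => ?_⟩
    · rw [← sum_div, hQX, mul_div_cancel_left₀ _ hz.ne']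
    · rw [← sum_div, hQY, mul_div_cancel_left₀ _ hz.ne']
  · exact (MarkovCoupling.prod MX MY).trans_coupling 0 z

theorem flowKernel_mul_outMass (hQ : Q ∈ couplingFlows MX MY) (z z' : X × Y) :
    flowKernel MX MY Q z z' * outMass Q z = Q (z, z') := by
  have hQ0 := hQ.1
  unfold flowKernel
  split_ifs with hz
  · exact div_mul_cancel₀ _ hz.ne'
  · have hz0 : outMass Q z = 0 := le_antisymm (not_lt.mp hz) (sum_nonneg fun _ _ => hQ0 _)
    have hQz : Q (z, z') = 0 :=
      le_antisymm (hz0 ▸ single_le_sum (fun w _ => hQ0 (z, w)) (mem_univ z')) (hQ0 _)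
    rw [hz0, hQz, mul_zero]

noncomputable def MarkovCoupling.ofFlow (hQ : Q ∈ couplingFlows MX MY) : MarkovCoupling MX MY where
  init := outMass Q
  trans _ := flowKernel MX MY Q
  init_coupling := ⟨fun _ => sum_nonneg fun _ _ => hQ.1 _, hQ.2.2.2.1, hQ.2.2.2.2⟩
  trans_coupling _ := isCoupling_flowKernel hQ

theorem MarkovCoupling.isTimeHomogeneous_ofFlow (hQ : Q ∈ couplingFlows MX MY) :
    IsTimeHomogeneous (MarkovCoupling.ofFlow hQ) := fun _ => rfl

theorem MarkovCoupling.hasStationaryInit_ofFlow (hQ : Q ∈ couplingFlows MX MY)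
    (hstat : inMass Q = outMass Q) : HasStationaryInit (MarkovCoupling.ofFlow hQ) := fun z' => by
  change ∑ z, flowKernel MX MY Q z z' * outMass Q z = outMass Q z'
  simp only [flowKernel_mul_outMass hQ]
  exact congrFun hstat z'

end CouplingFlow

namespace MarkovCoupling

variable {X Y : Type*} [Fintype X] [Fintype Y] {MX : MarkovChain X} {MY : MarkovChain Y}
  (π : MarkovCoupling MX MY) (n : ℕ)

noncomputable def cesaroFlow : (X × Y) × (X × Y) → ℝ :=
  fun e => (∑ t ∈ range (n + 1), π.law t e.1 * π.trans t e.1 e.2) / (n + 1)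

theorem outMass_cesaroFlow (z : X × Y) :
    outMass (π.cesaroFlow n) z = (∑ t ∈ range (n + 1), π.law t z) / (n + 1) := by
  simp only [outMass, cesaroFlow, ← sum_div]
  rw [sum_comm]
  simp only [← mul_sum, sum_trans_eq_one, mul_one]

theorem inMass_cesaroFlow (z' : X × Y) :
    inMass (π.cesaroFlow n) z' = (∑ t ∈ range (n + 1), π.law (t + 1) z') / (n + 1) := by
  simp only [inMass, cesaroFlow, ← sum_div, law_succ]
  rw [sum_comm]
  simp only [mul_comm]

theorem flowDefect_cesaroFlow_le :
    flowDefect (π.cesaroFlow n) ≤ Fintype.card (X × Y) / (n + 1) := by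
  have hdefect (z : X × Y) : inMass (π.cesaroFlow n) z - outMass (π.cesaroFlow n) z
      = (π.law (n + 1) z - π.law 0 z) / (n + 1) := by
    rw [inMass_cesaroFlow, outMass_cesaroFlow, ← sub_div, ← sum_sub_distrib,
      sum_range_sub (fun t => π.law t z)]
  calc flowDefect (π.cesaroFlow n) = ∑ z, |π.law (n + 1) z - π.law 0 z| / (n + 1) := by
        simp only [flowDefect, hdefect, abs_div, abs_of_pos (n.cast_add_one_pos (α := ℝ))]
    _ ≤ ∑ _z : X × Y, 1 / ((n : ℝ) + 1) := by
        gcongr with z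
        exact abs_sub_le_of_nonneg_of_le (π.law_nonneg _ z) (π.law_le_one _ z)
          (π.law_nonneg _ z) (π.law_le_one _ z)
    _ = Fintype.card (X × Y) / (n + 1) := by simp [div_eq_mul_inv]

theorem cost_cesaroFlow (C : X × Y → ℝ) :
    ∑ z, C z * outMass (π.cesaroFlow n) z
      = (∑ t ∈ range (n + 1), ∑ z, C z * π.law t z) / (n + 1) := by
  simp only [outMass_cesaroFlow, mul_div_assoc', ← sum_div, mul_sum]
  rw [sum_comm]

theorem cesaroFlow_mem_couplingFlows (hMX : IsStationaryChain MX) (hMY : IsStationaryChain MY) :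
    π.cesaroFlow n ∈ couplingFlows MX MY := by
  have hn : ((n : ℝ) + 1) ≠ 0 := n.cast_add_one_ne_zero
  refine ⟨fun e => div_nonneg (sum_nonneg fun t _ =>
      mul_nonneg (π.law_nonneg t _) ((π.trans_coupling t _).1 _)) (by positivity),
    fun z x' => ?_, fun z y' => ?_, fun x => ?_, fun y => ?_⟩
  · simp only [outMass_cesaroFlow, cesaroFlow, ← sum_div, div_mul_eq_mul_div, sum_mul]
    rw [sum_comm]
    simp only [← mul_sum, (π.trans_coupling _ z).2.1]
  · simp only [outMass_cesaroFlow, cesaroFlow, ← sum_div, div_mul_eq_mul_div, sum_mul]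
    rw [sum_comm]
    simp only [← mul_sum, (π.trans_coupling _ z).2.2]
  · simp only [outMass_cesaroFlow, ← sum_div]
    rw [sum_comm]
    simp [π.sum_law_fst hMX, hn]
  · simp only [outMass_cesaroFlow, ← sum_div]
    rw [sum_comm]
    simp [π.sum_law_snd hMY, hn]

end MarkovCoupling

section Distances

variable {X Y : Type*} [Fintype X] [Fintype Y] {MX : MarkovChain X} {MY : MarkovChain Y}
  {C : X × Y → ℝ} {p : ℕ → ℝ}

instance : Nonempty (MarkovCoupling MX MY) := ⟨MarkovCoupling.prod MX MY⟩

theorem dOTC_nonneg (hC : ∀ z, 0 ≤ C z) : 0 ≤ dOTC MX MY C :=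
  Real.iInf_nonneg fun π => sum_nonneg fun z _ => mul_nonneg (hC z) (π.1.init_coupling.1 z)

theorem dOTC_le (hC : ∀ z, 0 ≤ C z) (π : MarkovCoupling MX MY) (hhom : IsTimeHomogeneous π)
    (hstat : HasStationaryInit π) : dOTC MX MY C ≤ ∑ z, C z * π.init z := by
  refine ciInf_le (ι := {π : MarkovCoupling MX MY // IsTimeHomogeneous π ∧ HasStationaryInit π})
    ⟨0, ?_⟩ ⟨π, hhom, hstat⟩
  rintro _ ⟨π', rfl⟩
  exact sum_nonneg fun z _ => mul_nonneg (hC z) (π'.1.init_coupling.1 z)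

theorem cost_law_nonneg (hC : ∀ z, 0 ≤ C z) (π : MarkovCoupling MX MY) (t : ℕ) :
    0 ≤ ∑ z, C z * π.law t z :=
  sum_nonneg fun z _ => mul_nonneg (hC z) (π.law_nonneg t z)

theorem summable_cost_law (hC : ∀ z, 0 ≤ C z) (hp : IsProbNat p) (π : MarkovCoupling MX MY) :
    Summable fun t => p t * ∑ z, C z * π.law t z := by
  refine .of_nonneg_of_le (fun t => mul_nonneg (hp.1 t) (cost_law_nonneg hC π t))
    (fun t => mul_le_mul_of_nonneg_left ?_ (hp.1 t)) (hp.2.summable.mul_right (∑ z, C z))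
  exact sum_le_sum fun z _ => mul_le_of_le_one_right (hC z) (π.law_le_one t z)

theorem dOTM_nonneg (hC : ∀ z, 0 ≤ C z) (hp : ∀ t, 0 ≤ p t) : 0 ≤ dOTM p MX MY C :=
  Real.iInf_nonneg fun π => tsum_nonneg fun t => mul_nonneg (hp t) (cost_law_nonneg hC π t)

theorem dOTM_le_dOTC (hMX : IsStationaryChain MX) (hMY : IsStationaryChain MY)
    (hC : ∀ z, 0 ≤ C z) (hp : IsProbNat p) : dOTM p MX MY C ≤ dOTC MX MY C := by
  have : Nonempty {π : MarkovCoupling MX MY // IsTimeHomogeneous π ∧ HasStationaryInit π} :=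
    ⟨⟨.prod MX MY, fun _ => rfl, MarkovCoupling.hasStationaryInit_prod hMX hMY⟩⟩
  refine le_ciInf fun ⟨π, hhom, hstat⟩ => (ciInf_le ⟨0, ?_⟩ π).trans_eq ?_
  · rintro _ ⟨π', rfl⟩
    exact tsum_nonneg fun t => mul_nonneg (hp.1 t) (cost_law_nonneg hC π' t)
  · simp only [π.law_eq_init hhom hstat, tsum_mul_right, hp.2.tsum_eq, one_mul]

theorem exists_cost_law_lt_of_dOTM_eq_zero (hC : ∀ z, 0 ≤ C z) (hp : IsProbNat p)
    (hfull : ∀ t, 0 < p t) (h : dOTM p MX MY C = 0) (N : ℕ) {ε : ℝ} (hε : 0 < ε) :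
    ∃ π : MarkovCoupling MX MY, ∀ t ≤ N, ∑ z, C z * π.law t z < ε := by
  obtain ⟨t₀, -, ht₀⟩ := (range (N + 1)).exists_min_image p nonempty_range_add_one
  obtain ⟨π, hπ⟩ : ∃ π : MarkovCoupling MX MY,
      ∑' t, p t * ∑ z, C z * π.law t z < ε * p t₀ :=
    exists_lt_of_ciInf_lt (h.trans_lt (mul_pos hε (hfull t₀)))
  refine ⟨π, fun t ht => lt_of_mul_lt_mul_left ?_ (hfull t).le⟩
  calc p t * ∑ z, C z * π.law t z
      ≤ ∑' t, p t * ∑ z, C z * π.law t z := (summable_cost_law hC hp π).le_tsum t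
        fun j _ => mul_nonneg (hp.1 j) (cost_law_nonneg hC π j)
    _ < ε * p t₀ := hπ
    _ ≤ p t * ε := by
      rw [mul_comm]; exact mul_le_mul_of_nonneg_right (ht₀ t (mem_range.2 (by omega))) hε.le

theorem exists_couplingFlows_cost_add_flowDefect_lt (hMX : IsStationaryChain MX)
    (hMY : IsStationaryChain MY) (hC : ∀ z, 0 ≤ C z) (hp : IsProbNat p) (hfull : ∀ t, 0 < p t)
    (h : dOTM p MX MY C = 0) {η : ℝ} (hη : 0 < η) :
    ∃ Q ∈ couplingFlows MX MY, ∑ z, C z * outMass Q z + flowDefect Q < η := by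
  obtain ⟨N, hN⟩ := exists_nat_gt (2 * Fintype.card (X × Y) / η)
  have hN' : (0 : ℝ) < N + 1 := N.cast_add_one_pos
  obtain ⟨π, hπ⟩ := exists_cost_law_lt_of_dOTM_eq_zero hC hp hfull h N (half_pos hη)
  refine ⟨π.cesaroFlow N, π.cesaroFlow_mem_couplingFlows N hMX hMY, ?_⟩
  have hcost : (∑ t ∈ range (N + 1), ∑ z, C z * π.law t z) / (N + 1) < η / 2 := by
    rw [div_lt_iff₀ hN']
    calc ∑ t ∈ range (N + 1), ∑ z, C z * π.law t z < ∑ _t ∈ range (N + 1), η / 2 :=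
          sum_lt_sum_of_nonempty nonempty_range_add_one
            fun t ht => hπ t (Nat.lt_succ_iff.mp (mem_range.mp ht))
      _ = η / 2 * (N + 1) := by simp [mul_comm]
  have hdefect : (Fintype.card (X × Y) : ℝ) / (N + 1) < η / 2 := by
    rw [div_lt_iff₀ (by positivity)] at hN
    rw [div_lt_iff₀ hN']
    linarith
  rw [π.cost_cesaroFlow]
  linarith [π.flowDefect_cesaroFlow_le N]

theorem dOTC_eq_zero_of_dOTM_eq_zero (hMX : IsStationaryChain MX) (hMY : IsStationaryChain MY)
    (hC : ∀ z, 0 ≤ C z) (hp : IsProbNat p) (hfull : ∀ t, 0 < p t) (h : dOTM p MX MY C = 0) :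
    dOTC MX MY C = 0 := by
  obtain ⟨Q, hQ, hQ0⟩ := isCompact_couplingFlows.exists_le_of_forall_exists_lt
    (g := fun Q => ∑ z, C z * outMass Q z + flowDefect Q)
    (by unfold outMass; exact Continuous.continuousOn (by fun_prop)) fun η hη =>
      exists_couplingFlows_cost_add_flowDefect_lt hMX hMY hC hp hfull h hη
  have hcost_nonneg : 0 ≤ ∑ z, C z * outMass Q z :=
    sum_nonneg fun z _ => mul_nonneg (hC z) (sum_nonneg fun _ _ => hQ.1 _)
  obtain ⟨hcost, hdefect⟩ := (add_eq_zero_iff_of_nonneg hcost_nonneg (flowDefect_nonneg Q)).mp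
    (le_antisymm hQ0 (add_nonneg hcost_nonneg (flowDefect_nonneg Q)))
  refine le_antisymm ?_ (dOTC_nonneg hC)
  exact (dOTC_le hC _ (MarkovCoupling.isTimeHomogeneous_ofFlow hQ)
    (MarkovCoupling.hasStationaryInit_ofFlow hQ
      (inMass_eq_outMass_of_flowDefect_eq_zero hdefect))).trans_eq hcost

end Distances

/-- For stationary Markov chains and a fully supported distribution `p` on ℕ,
the OTC distance vanishes iff the OTM distance does. -/
theorem stmt3 {X Y : Type*} [Fintype X] [Fintype Y]
    (MX : MarkovChain X) (MY : MarkovChain Y)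
    (hMX : IsStationaryChain MX) (hMY : IsStationaryChain MY)
    (C : X × Y → ℝ) (hC : ∀ z, 0 ≤ C z)
    (p : ℕ → ℝ) (hp : IsProbNat p) (hfull : ∀ t, 0 < p t) :
    dOTC MX MY C = 0 ↔ dOTM p MX MY C = 0 :=
  ⟨fun h => le_antisymm (h ▸ dOTM_le_dOTC hMX hMY hC hp) (dOTM_nonneg hC hp.1),
    dOTC_eq_zero_of_dOTM_eq_zero hMX hMY hC hp hfull⟩
end

section
/- Let (p_k)_{k∈ℕ} be a sequence of probability distributions on ℕ and p a probability distribution on ℕ such that d_TV(p_k, p) → 0 as k → ∞, where d_TV(q,q') = (1/2) Σ_{t∈ℕ} |q(t) − q'(t)|. Then for all finite Markov chains 𝒳, 𝒴 and any cost matrix C: X×Y → ℝ₊, lim_{k→∞} d_OTM^{p_k}(𝒳,𝒴;C) = d_OTM^p(𝒳,𝒴;C). -/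
open scoped BigOperators
open Filter Topology

section Aux

variable {X Y : Type*} [Fintype X] [Fintype Y] {MX : MarkovChain X} {MY : MarkovChain Y}

lemma coupling_sum_one {μ : X × Y → ℝ} {α : X → ℝ} {β : Y → ℝ}
    (h : IsCoupling μ α β) (hα : ∑ x, α x = 1) : ∑ z : X × Y, μ z = 1 := by
  rw [Fintype.sum_prod_type]
  simp only [h.2.1, hα]

lemma law_nonneg (π : MarkovCoupling MX MY) : ∀ t z, 0 ≤ π.law t z := by
  intro t
  induction t with
  | zero => exact π.init_coupling.1
  | succ t ih =>
    intro z
    exact Finset.sum_nonneg fun w _ => mul_nonneg ((π.trans_coupling t w).1 z) (ih w)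

lemma law_sum_one (π : MarkovCoupling MX MY) : ∀ t, ∑ z : X × Y, π.law t z = 1 := by
  intro t
  induction t with
  | zero => exact coupling_sum_one π.init_coupling MX.init_prob.2
  | succ t ih =>
    show ∑ z : X × Y, ∑ w : X × Y, π.trans t w z * π.law t w = 1
    rw [Finset.sum_comm]
    have hrow : ∀ w : X × Y, ∑ z : X × Y, π.trans t w z = 1 := fun w =>
      coupling_sum_one (π.trans_coupling t w) (MX.kernel_prob w.1).2
    calc ∑ w : X × Y, ∑ z : X × Y, π.trans t w z * π.law t w
        = ∑ w : X × Y, π.law t w := by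
          refine Finset.sum_congr rfl fun w _ => ?_
          rw [← Finset.sum_mul, hrow w, one_mul]
      _ = 1 := ih

lemma law_le_one (π : MarkovCoupling MX MY) (t : ℕ) (z : X × Y) : π.law t z ≤ 1 := by
  rw [← law_sum_one π t]
  exact Finset.single_le_sum (fun w _ => law_nonneg π t w) (Finset.mem_univ z)

noncomputable instance inst_s4 : Nonempty (MarkovCoupling MX MY) := by
  refine ⟨{ init := fun z => MX.init z.1 * MY.init z.2
            trans := fun _ xy z => MX.kernel xy.1 z.1 * MY.kernel xy.2 z.2
            init_coupling := ?_
            trans_coupling := fun t xy => ?_ }⟩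
  · refine ⟨fun z => mul_nonneg (MX.init_prob.1 z.1) (MY.init_prob.1 z.2), fun x => ?_, fun y => ?_⟩
    · show ∑ y : Y, MX.init x * MY.init y = MX.init x
      rw [← Finset.mul_sum, MY.init_prob.2, mul_one]
    · show ∑ x : X, MX.init x * MY.init y = MY.init y
      rw [← Finset.sum_mul, MX.init_prob.2, one_mul]
  · refine ⟨fun z => mul_nonneg ((MX.kernel_prob xy.1).1 z.1) ((MY.kernel_prob xy.2).1 z.2),
      fun x => ?_, fun y => ?_⟩
    · show ∑ y : Y, MX.kernel xy.1 x * MY.kernel xy.2 y = MX.kernel xy.1 x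
      rw [← Finset.mul_sum, (MY.kernel_prob xy.2).2, mul_one]
    · show ∑ x : X, MX.kernel xy.1 x * MY.kernel xy.2 y = MY.kernel xy.2 y
      rw [← Finset.sum_mul, (MX.kernel_prob xy.1).2, one_mul]

lemma cost_nonneg (π : MarkovCoupling MX MY) {C : X × Y → ℝ} (hC : ∀ z, 0 ≤ C z) (t : ℕ) :
    0 ≤ ∑ z : X × Y, C z * π.law t z :=
  Finset.sum_nonneg fun z _ => mul_nonneg (hC z) (law_nonneg π t z)

lemma cost_le (π : MarkovCoupling MX MY) {C : X × Y → ℝ} (hC : ∀ z, 0 ≤ C z) (t : ℕ) :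
    ∑ z : X × Y, C z * π.law t z ≤ ∑ z : X × Y, C z :=
  Finset.sum_le_sum fun z _ => by
    calc C z * π.law t z ≤ C z * 1 := mul_le_mul_of_nonneg_left (law_le_one π t z) (hC z)
      _ = C z := mul_one _

lemma summable_term {q : ℕ → ℝ} (hq : IsProbNat q) (π : MarkovCoupling MX MY)
    {C : X × Y → ℝ} (hC : ∀ z, 0 ≤ C z) :
    Summable (fun t => q t * ∑ z : X × Y, C z * π.law t z) := by
  refine Summable.of_nonneg_of_le (fun t => mul_nonneg (hq.1 t) (cost_nonneg π hC t))
    (fun t => ?_) (hq.2.summable.mul_right (∑ z : X × Y, C z))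
  exact mul_le_mul_of_nonneg_left (cost_le π hC t) (hq.1 t)

lemma tsum_mul_diff_le {q p g : ℕ → ℝ} {M : ℝ} (hq : Summable q) (hp : Summable p)
    (hg0 : ∀ t, 0 ≤ g t) (hgM : ∀ t, g t ≤ M) (hq0 : ∀ t, 0 ≤ q t) (hp0 : ∀ t, 0 ≤ p t) :
    |(∑' t, q t * g t) - ∑' t, p t * g t| ≤ M * ∑' t, |q t - p t| := by
  have habs : Summable fun t => |q t - p t| := (hq.sub hp).abs
  have hqg : Summable fun t => q t * g t :=
    Summable.of_nonneg_of_le (fun t => mul_nonneg (hq0 t) (hg0 t))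
      (fun t => mul_le_mul_of_nonneg_left (hgM t) (hq0 t)) (hq.mul_right M)
  have hpg : Summable fun t => p t * g t :=
    Summable.of_nonneg_of_le (fun t => mul_nonneg (hp0 t) (hg0 t))
      (fun t => mul_le_mul_of_nonneg_left (hgM t) (hp0 t)) (hp.mul_right M)
  rw [← Summable.tsum_sub hqg hpg]
  have hs : Summable fun t => q t * g t - p t * g t := hqg.sub hpg
  calc |∑' t, (q t * g t - p t * g t)| ≤ ∑' t, |q t * g t - p t * g t| := by
        have h' : Summable fun t => ‖q t * g t - p t * g t‖ := hs.abs
        simpa [Real.norm_eq_abs] using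
          norm_tsum_le_tsum_norm (f := fun t => q t * g t - p t * g t) h'
    _ ≤ ∑' t, |q t - p t| * M := by
        refine Summable.tsum_le_tsum (fun t => ?_) hs.abs (habs.mul_right M)
        rw [← sub_mul, abs_mul]
        exact mul_le_mul_of_nonneg_left ((abs_of_nonneg (hg0 t)).le.trans (hgM t)) (abs_nonneg _)
    _ = M * ∑' t, |q t - p t| := by rw [tsum_mul_right, mul_comm]

lemma dOTM_diff_le {q p : ℕ → ℝ} (hq : IsProbNat q) (hp : IsProbNat p)
    (MX : MarkovChain X) (MY : MarkovChain Y) {C : X × Y → ℝ} (hC : ∀ z, 0 ≤ C z) :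
    |dOTM q MX MY C - dOTM p MX MY C| ≤ (∑ z : X × Y, C z) * ∑' t, |q t - p t| := by
  set M : ℝ := ∑ z : X × Y, C z with hM
  set ε : ℝ := M * ∑' t, |q t - p t| with hε
  have key : ∀ π : MarkovCoupling MX MY,
      |(∑' t, q t * ∑ z : X × Y, C z * π.law t z) -
        (∑' t, p t * ∑ z : X × Y, C z * π.law t z)| ≤ ε :=
    fun π => tsum_mul_diff_le hq.2.summable hp.2.summable
      (cost_nonneg π hC) (cost_le π hC) hq.1 hp.1
  have hbdd : ∀ (r : ℕ → ℝ), (∀ t, 0 ≤ r t) → BddBelow (Set.range fun π : MarkovCoupling MX MY =>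
      ∑' t, r t * ∑ z : X × Y, C z * π.law t z) := by
    intro r hr
    refine ⟨0, ?_⟩
    rintro _ ⟨π, rfl⟩
    exact tsum_nonneg fun t => mul_nonneg (hr t) (cost_nonneg π hC t)
  have half : ∀ q' p' : ℕ → ℝ, IsProbNat q' → IsProbNat p' →
      (∀ π : MarkovCoupling MX MY,
        |(∑' t, q' t * ∑ z : X × Y, C z * π.law t z) -
          (∑' t, p' t * ∑ z : X × Y, C z * π.law t z)| ≤ ε) →
      dOTM q' MX MY C ≤ dOTM p' MX MY C + ε := by
    intro q' p' hq' hp' hkey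
    rw [dOTM, dOTM, ← sub_le_iff_le_add]
    refine le_ciInf fun π => ?_
    rw [sub_le_iff_le_add]
    have h := abs_le.1 (hkey π)
    exact (ciInf_le (hbdd q' hq'.1) π).trans (by linarith)
  have key' : ∀ π : MarkovCoupling MX MY,
      |(∑' t, p t * ∑ z : X × Y, C z * π.law t z) -
        (∑' t, q t * ∑ z : X × Y, C z * π.law t z)| ≤ ε := by
    intro π; rw [abs_sub_comm]; exact key π
  have h1 := half q p hq hp key
  have h2 := half p q hp hq key'
  rw [abs_le]
  constructor <;> linarith

end Aux

/-- The OTM distance is continuous in `p` with respect to the total variation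
distance on probability distributions over ℕ. -/
theorem stmt4 {X Y : Type*} [Fintype X] [Fintype Y]
    (MX : MarkovChain X) (MY : MarkovChain Y)
    (C : X × Y → ℝ) (hC : ∀ z, 0 ≤ C z)
    (ps : ℕ → ℕ → ℝ) (p : ℕ → ℝ)
    (hps : ∀ k, IsProbNat (ps k)) (hp : IsProbNat p)
    (htv : Tendsto (fun k => (1 / 2 : ℝ) * ∑' t, |ps k t - p t|) atTop (𝓝 0)) :
    Tendsto (fun k => dOTM (ps k) MX MY C) atTop (𝓝 (dOTM p MX MY C)) := by
  have hTV : Tendsto (fun k => ∑' t, |ps k t - p t|) atTop (𝓝 0) := by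
    have := htv.const_mul (2 : ℝ)
    simpa using this
  set M : ℝ := ∑ z : X × Y, C z with hM
  have hMnn : 0 ≤ M := Finset.sum_nonneg fun z _ => hC z
  have hbound : ∀ k, |dOTM (ps k) MX MY C - dOTM p MX MY C| ≤ M * ∑' t, |ps k t - p t| :=
    fun k => dOTM_diff_le (hps k) hp MX MY hC
  have h0 : Tendsto (fun k => |dOTM (ps k) MX MY C - dOTM p MX MY C|) atTop (𝓝 0) := by
    refine squeeze_zero (fun k => abs_nonneg _) hbound ?_
    simpa using hTV.const_mul M
  rw [tendsto_iff_dist_tendsto_zero]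
  simpa [Real.dist_eq] using h0
end
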